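/- Let ℓ ≥ 0 be an integer and a ≥ 0 a real number. Define the polynomial P_ℓ(s,a) in s by P_ℓ(s,0) := (2^{ℓ+1}/(2ℓ+1)!!) s^{2ℓ+1}, and, for a ≠ 0, P_ℓ(s,a) := (−2/a)^{ℓ+1} Σ_{k=0}^{ℓ} c^{(ℓ)}_k a^{-k} s^{ℓ-k}, where c^{(ℓ)}_0 = 1 and c^{(ℓ)}_k = (1/(2^k k!)) Π_{j=1-k}^{k} (ℓ+j) for 1 ≤ k ≤ ℓ (with c^{(0)}_0 = 1). Let D be the operator taking a function f : ℝ → ℝ to s ↦ f′(s)/(2s). Then for all real s > 0, d/ds [ D^ℓ ( s ↦ e^{-as} P_ℓ(s,a) ) ](s) = 2 e^{-as}. -/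

import Mathlib

/-!
Write `f_ℓ(s) = e^{-as} P_ℓ(s,a)`. The whole proof rests on the ladder relation
`f_{ℓ+1}'(s) = 2 s f_ℓ(s)`, i.e. `D f_{ℓ+1} = f_ℓ` on `s > 0`; iterating it gives
`D^ℓ f_ℓ = f_0`, and `f_0` is `2s` (for `a = 0`) or `-(2/a) e^{-as}`, both with derivative `2 e^{-as}`.
For `a = 0` the ladder relation is `(2ℓ+3)!! = (2ℓ+3) (2ℓ+1)!!`. For `a ≠ 0`, after a shift of the
summation index it reduces to the recurrence `c^{(ℓ+1)}_{k+1} = c^{(ℓ)}_{k+1} + (ℓ+1-k) c^{(ℓ+1)}_k`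
of the (reverse Bessel) coefficients, which is read off from the product `∏_{j=1-k}^{k} (ℓ+j)`.
-/

open scoped BigOperators

/-- The coefficients `c^{(ℓ)}_k` (as real numbers). -/
noncomputable def cCoeff (ℓ k : ℕ) : ℝ :=
  if k = 0 then 1
  else (1 / (2 ^ k * (k.factorial : ℝ))) *
    ∏ j ∈ Finset.Icc (1 - (k : ℤ)) (k : ℤ), ((ℓ : ℝ) + (j : ℝ))

/-- The polynomial `P_ℓ(s,a)`. -/
noncomputable def Ppoly (ℓ : ℕ) (a s : ℝ) : ℝ :=
  if a = 0 then (2 ^ (ℓ + 1) / ((2 * ℓ + 1).doubleFactorial : ℝ)) * s ^ (2 * ℓ + 1)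
  else (-2 / a) ^ (ℓ + 1) * ∑ k ∈ Finset.range (ℓ + 1), cCoeff ℓ k * (a ^ k)⁻¹ * s ^ (ℓ - k)

/-- The operator `D : f ↦ (s ↦ f′(s)/(2s))`. -/
noncomputable def Dop : (ℝ → ℝ) → (ℝ → ℝ) := fun f s => deriv f s / (2 * s)

open Finset

noncomputable def centeredProd (k : ℕ) (x : ℝ) : ℝ := ∏ j ∈ Icc (1 - (k : ℤ)) k, (x + j)

lemma centeredProd_zero (x : ℝ) : centeredProd 0 x = 1 := by
  simp [centeredProd]

lemma centeredProd_succ (k : ℕ) (x : ℝ) :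
    centeredProd (k + 1) x = (x - k) * (x + (k + 1)) * centeredProd k x := by
  have hIcc : Icc (1 - ((k + 1 : ℕ) : ℤ)) (k + 1 : ℕ) =
      insert (-(k : ℤ)) (insert ((k : ℤ) + 1) (Icc (1 - (k : ℤ)) k)) := by
    rw [insert_Icc_right_eq_Icc_add_one (by omega), ← insert_Icc_add_one_left_eq_Icc (by omega)]
    push_cast; ring_nf
  rw [centeredProd, hIcc, prod_insert (by simp; omega), prod_insert (by simp), centeredProd]
  push_cast; ring

lemma centeredProd_add_one (k : ℕ) (x : ℝ) :
    (x + 1 - k) * centeredProd k (x + 1) = (x + (k + 1)) * centeredProd k x := by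
  have hshift : centeredProd k (x + 1) = ∏ j ∈ Icc (2 - (k : ℤ)) (k + 1), (x + j) := by
    have hIcc : Icc (2 - (k : ℤ)) (k + 1) = (Icc (1 - (k : ℤ)) k).map (addRightEmbedding 1) := by
      rw [map_add_right_Icc]; ring_nf
    rw [centeredProd, hIcc, prod_map]
    exact prod_congr rfl fun _ _ => by rw [addRightEmbedding_apply]; push_cast; ring
  have hleft : Icc (1 - (k : ℤ)) (k + 1) = insert (1 - (k : ℤ)) (Icc (2 - (k : ℤ)) (k + 1)) := by
    rw [← insert_Icc_add_one_left_eq_Icc (by omega)]; ring_nf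
  have hright : Icc (1 - (k : ℤ)) (k + 1) = insert ((k : ℤ) + 1) (Icc (1 - (k : ℤ)) k) :=
    (insert_Icc_right_eq_Icc_add_one (by omega)).symm
  -- both sides are `∏_{j=1-k}^{k+1} (x + j)`
  have key := congrArg (fun t : Finset ℤ => ∏ j ∈ t, (x + (j : ℝ))) (hleft.symm.trans hright)
  simp only [prod_insert (show (1 - (k:ℤ)) ∉ Icc (2 - (k : ℤ)) (k + 1) by simp),
    prod_insert (show (k:ℤ) + 1 ∉ Icc (1 - (k : ℤ)) k by simp)] at key
  rw [hshift, centeredProd]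
  push_cast at key
  linear_combination key

lemma cCoeff_zero (ℓ : ℕ) : cCoeff ℓ 0 = 1 := if_pos rfl

lemma cCoeff_eq_centeredProd (ℓ k : ℕ) : cCoeff ℓ k = centeredProd k ℓ / (2 ^ k * k.factorial) := by
  rcases k with _ | k
  · simp [cCoeff, centeredProd_zero]
  · rw [cCoeff, if_neg k.succ_ne_zero, centeredProd]; ring

lemma cCoeff_succ_succ (ℓ k : ℕ) :
    cCoeff (ℓ + 1) (k + 1) = cCoeff ℓ (k + 1) + (ℓ + 1 - k) * cCoeff (ℓ + 1) k := by
  have hshift := centeredProd_add_one k ℓ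
  simp only [cCoeff_eq_centeredProd, centeredProd_succ, Nat.factorial_succ, pow_succ]
  push_cast
  field_simp
  linear_combination ((ℓ : ℝ) - k) * hshift

lemma cCoeff_succ_self (ℓ : ℕ) : cCoeff ℓ (ℓ + 1) = 0 := by
  simp [cCoeff_eq_centeredProd, centeredProd_succ]

noncomputable def besselSum (ℓ : ℕ) (a s : ℝ) : ℝ :=
  ∑ k ∈ range (ℓ + 1), cCoeff ℓ k * (a ^ k)⁻¹ * s ^ (ℓ - k)

lemma mul_besselSum (ℓ : ℕ) (a s : ℝ) :
    s * besselSum ℓ a s = ∑ k ∈ range (ℓ + 2), cCoeff ℓ k * (a ^ k)⁻¹ * s ^ (ℓ + 1 - k) := by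
  rw [sum_range_succ, cCoeff_succ_self, zero_mul, zero_mul, add_zero, besselSum, mul_sum]
  refine sum_congr rfl fun k hk => ?_
  rw [Nat.sub_add_comm (Nat.lt_succ_iff.mp (mem_range.mp hk)), pow_succ]
  ring

lemma hasDerivAt_besselSum_succ (ℓ : ℕ) {a : ℝ} (ha : a ≠ 0) (s : ℝ) :
    HasDerivAt (besselSum (ℓ + 1) a) (a * besselSum (ℓ + 1) a s - a * (s * besselSum ℓ a s)) s := by
  have hterm : HasDerivAt (besselSum (ℓ + 1) a) (∑ k ∈ range (ℓ + 2),
      cCoeff (ℓ + 1) k * (a ^ k)⁻¹ * ((ℓ + 1 - k : ℕ) * s ^ (ℓ + 1 - k - 1))) s :=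
    HasDerivAt.fun_sum fun k _ => (hasDerivAt_pow _ s).const_mul _
  refine hterm.congr_deriv ?_
  -- drop the vanishing last term on the left and first term on the right, then match termwise
  rw [mul_besselSum, besselSum, mul_sum, mul_sum, ← sum_sub_distrib, sum_range_succ,
    sum_range_succ' _ (ℓ + 1)]
  simp only [Nat.sub_self, Nat.cast_zero, zero_mul, mul_zero, add_zero, cCoeff_zero, sub_self]
  refine sum_congr rfl fun k hk => ?_
  have hk : k ≤ ℓ := Nat.lt_succ_iff.mp (mem_range.mp hk)
  rw [cCoeff_succ_succ, Nat.cast_sub (by omega), show ℓ + 1 - k - 1 = ℓ - k by omega,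
    show ℓ + 1 - (k + 1) = ℓ - k by omega, pow_succ]
  push_cast
  field_simp
  ring

lemma eqOn_Dop {f g : ℝ → ℝ} {U : Set ℝ} (hU : IsOpen U) (h : Set.EqOn f g U) :
    Set.EqOn (Dop f) (Dop g) U := fun x hx => by
  rw [Dop, Dop, (h.eventuallyEq_of_mem (hU.mem_nhds hx)).deriv_eq]

lemma eqOn_Dop_iterate {f g : ℝ → ℝ} {U : Set ℝ} (hU : IsOpen U) (h : Set.EqOn f g U) (n : ℕ) :
    Set.EqOn (Dop^[n] f) (Dop^[n] g) U := by
  induction n with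
  | zero => exact h
  | succ n ih => simpa only [Function.iterate_succ_apply'] using eqOn_Dop hU ih

lemma Ppoly_zero (ℓ : ℕ) :
    Ppoly ℓ 0 = fun s => 2 ^ (ℓ + 1) / ((2 * ℓ + 1).doubleFactorial : ℝ) * s ^ (2 * ℓ + 1) :=
  funext fun _ => if_pos rfl

lemma Ppoly_of_ne_zero (ℓ : ℕ) {a : ℝ} (ha : a ≠ 0) :
    Ppoly ℓ a = fun s => (-2 / a) ^ (ℓ + 1) * besselSum ℓ a s :=
  funext fun _ => if_neg ha

noncomputable def expPpoly (ℓ : ℕ) (a : ℝ) : ℝ → ℝ := fun s => Real.exp (-a * s) * Ppoly ℓ a s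

lemma hasDerivAt_exp_neg_mul (a s : ℝ) :
    HasDerivAt (fun s => Real.exp (-a * s)) (Real.exp (-a * s) * -a) s := by
  simpa using ((hasDerivAt_id s).const_mul (-a)).exp

lemma hasDerivAt_expPpoly_zero (a s : ℝ) : HasDerivAt (expPpoly 0 a) (2 * Real.exp (-a * s)) s := by
  by_cases ha : a = 0
  · subst ha
    unfold expPpoly
    simpa [Ppoly_zero] using (hasDerivAt_id s).const_mul (2 : ℝ)
  · have h := (hasDerivAt_exp_neg_mul a s).mul_const (-2 / a)
    unfold expPpoly
    simp only [Ppoly_of_ne_zero 0 ha, besselSum, zero_add, pow_one, sum_range_one, cCoeff_zero,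
      pow_zero, inv_one, Nat.sub_self, mul_one]
    refine h.congr_deriv ?_
    field_simp

lemma hasDerivAt_expPpoly_succ (ℓ : ℕ) (a s : ℝ) :
    HasDerivAt (expPpoly (ℓ + 1) a) (2 * s * expPpoly ℓ a s) s := by
  by_cases ha : a = 0
  · subst ha
    unfold expPpoly
    simp only [Ppoly_zero, neg_zero, zero_mul, Real.exp_zero, one_mul]
    refine ((hasDerivAt_pow _ s).const_mul _).congr_deriv ?_
    rw [show 2 * (ℓ + 1) + 1 = 2 * ℓ + 1 + 2 by ring, Nat.doubleFactorial_add_two]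
    have : ((2 * ℓ + 1).doubleFactorial : ℝ) ≠ 0 := by positivity
    push_cast
    field_simp
    ring
  · have h := (hasDerivAt_exp_neg_mul a s).fun_mul
      ((hasDerivAt_besselSum_succ ℓ ha s).const_mul ((-2 / a) ^ (ℓ + 1 + 1)))
    unfold expPpoly
    simp only [Ppoly_of_ne_zero _ ha]
    refine h.congr_deriv ?_
    have h2a : -2 / a * a = -2 := div_mul_cancel₀ _ ha
    rw [pow_succ _ (ℓ + 1)]
    linear_combination (-Real.exp (-a * s) * (-2 / a) ^ (ℓ + 1) * s * besselSum ℓ a s) * h2a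

lemma eqOn_Dop_expPpoly_succ (ℓ : ℕ) (a : ℝ) :
    Set.EqOn (Dop (expPpoly (ℓ + 1) a)) (expPpoly ℓ a) (Set.Ioi 0) := fun s hs => by
  rw [Dop, (hasDerivAt_expPpoly_succ ℓ a s).deriv]
  field_simp [(Set.mem_Ioi.mp hs).ne']

lemma eqOn_Dop_iterate_expPpoly (ℓ : ℕ) (a : ℝ) :
    Set.EqOn (Dop^[ℓ] (expPpoly ℓ a)) (expPpoly 0 a) (Set.Ioi 0) := by
  induction ℓ with
  | zero => exact Set.eqOn_refl _ _
  | succ ℓ ih =>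
    rw [Function.iterate_succ_apply]
    exact (eqOn_Dop_iterate isOpen_Ioi (eqOn_Dop_expPpoly_succ ℓ a) ℓ).trans ih

theorem stmt_9_general (ℓ : ℕ) (a : ℝ) (s : ℝ) (hs : 0 < s) :
    deriv (Dop^[ℓ] fun s : ℝ => Real.exp (-a * s) * Ppoly ℓ a s) s =
      2 * Real.exp (-a * s) := by
  have hloc := (eqOn_Dop_iterate_expPpoly ℓ a).eventuallyEq_of_mem (isOpen_Ioi.mem_nhds hs)
  exact hloc.deriv_eq.trans (hasDerivAt_expPpoly_zero a s).deriv

/-- `d/ds [ D^ℓ (s ↦ e^{-as} P_ℓ(s,a)) ](s) = 2 e^{-as}` for `s > 0`. -/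
theorem stmt_9 (ℓ : ℕ) (a : ℝ) (ha : 0 ≤ a) (s : ℝ) (hs : 0 < s) :
    deriv (Dop^[ℓ] fun s : ℝ => Real.exp (-a * s) * Ppoly ℓ a s) s =
      2 * Real.exp (-a * s) :=
  stmt_9_general ℓ a s hs
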